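/- arXiv:1703.08905 — 3 statements merged into one kernel-verified Lean document; each statement's English description precedes it below -/
import Mathlib

section
/- For any phase-1 quorum q1 ∈ Q1 and any phase-2 quorum q2 ∈ Q2 of the WPaxos quorum system, the intersection q1 ∩ q2 is nonempty. -/
/-- A node lives in one of `Z` zones, each zone having `2f+1` nodes. -/
abbrev Node (f Z : ℕ) := Fin Z × Fin (2 * f + 1)

/-- The part of a set of nodes `q` lying in zone `z`. -/
def zpart (f Z : ℕ) (q : Finset (Node f Z)) (z : Fin Z) : Finset (Node f Z) :=
  q.filter (fun x => x.1 = z)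

/-- WPaxos phase-1 quorums: `Z - F` zones, `f+1` nodes in each touched zone. -/
def Q1 (f F Z : ℕ) : Set (Finset (Node f Z)) :=
  {q | (q.image Prod.fst).card = Z - F ∧
       ∀ z : Fin Z, (zpart f Z q z).Nonempty → (zpart f Z q z).card = f + 1}

/-- WPaxos phase-2 quorums: `F + 1` zones, `f+1` nodes in each touched zone. -/
def Q2 (f F Z : ℕ) : Set (Finset (Node f Z)) :=
  {q | (q.image Prod.fst).card = F + 1 ∧
       ∀ z : Fin Z, (zpart f Z q z).Nonempty → (zpart f Z q z).card = f + 1}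

lemma zones_intersect {α : Type*} [DecidableEq α] [Fintype α]
    (A B : Finset α) (h : Fintype.card α < A.card + B.card) : (A ∩ B).Nonempty := by
  by_contra hc
  rw [Finset.not_nonempty_iff_eq_empty] at hc
  have hdisj : Disjoint A B := Finset.disjoint_iff_inter_eq_empty.mpr hc
  have := Finset.card_union_of_disjoint hdisj ▸ Finset.card_le_univ (A ∪ B)
  omega

lemma mem_zpart_iff (f Z : ℕ) (q : Finset (Node f Z)) (z : Fin Z) (x : Node f Z) :
    x ∈ zpart f Z q z ↔ x ∈ q ∧ x.1 = z := by
  simp [zpart]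

/-- Any WPaxos phase-1 quorum intersects any WPaxos phase-2 quorum. -/
theorem wpaxos_quorums_intersect (f F Z : ℕ) (hFZ : F < Z)
    (q1 : Finset (Node f Z)) (hq1 : q1 ∈ Q1 f F Z)
    (q2 : Finset (Node f Z)) (hq2 : q2 ∈ Q2 f F Z) :
    (q1 ∩ q2).Nonempty := by
  obtain ⟨h1c, h1z⟩ := hq1
  obtain ⟨h2c, h2z⟩ := hq2
  -- find a common zone
  have hz : ((q1.image Prod.fst) ∩ (q2.image Prod.fst)).Nonempty := by
    apply zones_intersect
    simp only [h1c, h2c, Fintype.card_fin]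
    omega
  obtain ⟨z, hz⟩ := hz
  rw [Finset.mem_inter] at hz
  obtain ⟨hz1, hz2⟩ := hz
  -- zparts are nonempty
  have hne1 : (zpart f Z q1 z).Nonempty := by
    obtain ⟨x, hx, hxz⟩ := Finset.mem_image.mp hz1
    exact ⟨x, (mem_zpart_iff f Z q1 z x).mpr ⟨hx, hxz⟩⟩
  have hne2 : (zpart f Z q2 z).Nonempty := by
    obtain ⟨x, hx, hxz⟩ := Finset.mem_image.mp hz2
    exact ⟨x, (mem_zpart_iff f Z q2 z x).mpr ⟨hx, hxz⟩⟩
  have hc1 := h1z z hne1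
  have hc2 := h2z z hne2
  -- project to second coordinate
  have hinj : ∀ (q : Finset (Node f Z)), ((zpart f Z q z).image Prod.snd).card
      = (zpart f Z q z).card := by
    intro q
    apply Finset.card_image_of_injOn
    intro a ha b hb hab
    simp only [Finset.mem_coe, mem_zpart_iff] at ha hb
    exact Prod.ext (ha.2.trans hb.2.symm) hab
  have hs : (((zpart f Z q1 z).image Prod.snd) ∩ ((zpart f Z q2 z).image Prod.snd)).Nonempty := by
    apply zones_intersect
    rw [hinj, hinj, hc1, hc2, Fintype.card_fin]
    omega
  obtain ⟨s, hs⟩ := hs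
  rw [Finset.mem_inter] at hs
  obtain ⟨hs1, hs2⟩ := hs
  obtain ⟨x, hx, hxs⟩ := Finset.mem_image.mp hs1
  obtain ⟨y, hy, hys⟩ := Finset.mem_image.mp hs2
  rw [mem_zpart_iff] at hx hy
  have hxy : x = y := Prod.ext (hx.2.trans hy.2.symm) (hxs.trans hys.symm)
  exact ⟨x, Finset.mem_inter.mpr ⟨hx.1, hxy ▸ hy.1⟩⟩
end

section
/- Let D ⊆ Nodes be a set of failed nodes, and suppose the set of zones z in which D contains at least f+1 nodes (i.e., |D_z| ≥ f+1, where D_z = {x ∈ D : x.1 = z}) has cardinality at most F. Then there exists a phase-1 quorum q1 ∈ Q1 with q1 ∩ D = ∅; that is, WPaxos can form a valid phase-1 quorum despite up to F failed zones and up to f crashed nodes in every other zone. -/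
/-!
Call a zone light if it holds at most `f` failed nodes. At most `F` zones are heavy, so at least
`Z - F` are light, and a light zone still has `(2f+1) - f = f+1` live nodes. Picking `Z - F` light
zones and `f+1` live nodes in each gives a phase-1 quorum that avoids every failed node.
-/

open Finset

section Fibres

variable {α β : Type*} [DecidableEq α] [DecidableEq β]

theorem filter_fst_biUnion {S : Finset α} {U : α → Finset (α × β)}
    (hU : ∀ z ∈ S, ∀ x ∈ U z, x.1 = z) (z : α) :
    (S.biUnion U).filter (·.1 = z) = if z ∈ S then U z else ∅ := by
  ext x
  simp only [mem_filter, mem_biUnion]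
  split_ifs with hz
  · constructor
    · rintro ⟨⟨w, hw, hx⟩, rfl⟩
      rwa [hU w hw x hx]
    · exact fun hx => ⟨⟨z, hz, hx⟩, hU z hz x hx⟩
  · simp only [notMem_empty, iff_false, not_and]
    rintro ⟨w, hw, hx⟩ rfl
    exact hz (hU w hw x hx ▸ hw)

theorem image_fst_biUnion {S : Finset α} {U : α → Finset (α × β)}
    (hU : ∀ z ∈ S, ∀ x ∈ U z, x.1 = z) (hne : ∀ z ∈ S, (U z).Nonempty) :
    (S.biUnion U).image Prod.fst = S := by
  ext z
  simp only [mem_image, mem_biUnion]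
  constructor
  · rintro ⟨x, ⟨w, hw, hx⟩, rfl⟩
    rwa [hU w hw x hx]
  · intro hz
    obtain ⟨x, hx⟩ := hne z hz
    exact ⟨x, ⟨z, hz, hx⟩, hU z hz x hx⟩

theorem card_filter_fst_compl [Fintype α] [Fintype β]
    (D : Finset (α × β)) (z : α) :
    (Dᶜ.filter (·.1 = z)).card = Fintype.card β - (D.filter (·.1 = z)).card := by
  have hfibre : univ.filter (fun x : α × β => x.1 = z) =
      univ.map ⟨Prod.mk z, Prod.mk_right_injective z⟩ := by
    ext ⟨a, b⟩
    simp [eq_comm]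
  have hsplit := card_filter_add_card_filter_not
    (s := univ.filter fun x : α × β => x.1 = z) (· ∈ D)
  rw [filter_filter, filter_filter, hfibre, card_map, card_univ] at hsplit
  have hin : D.filter (·.1 = z) = univ.filter (fun x => x.1 = z ∧ x ∈ D) := by
    ext; simp [and_comm]
  have hout : Dᶜ.filter (·.1 = z) = univ.filter (fun x => x.1 = z ∧ x ∉ D) := by
    ext; simp [and_comm]
  rw [hin, hout]
  omega

end Fibres

theorem card_sub_le_card_filter_le {ι : Type*} [Fintype ι] (g : ι → ℕ) {f F : ℕ}
    (h : (univ.filter fun i => f + 1 ≤ g i).card ≤ F) :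
    Fintype.card ι - F ≤ (univ.filter fun i => g i ≤ f).card := by
  have hsplit := card_filter_add_card_filter_not (s := (univ : Finset ι)) (g · ≤ f)
  simp only [not_le, Nat.lt_iff_add_one_le, card_univ] at hsplit
  omega

section Zones

variable {f F Z : ℕ}

theorem add_one_le_card_zpart_compl (D : Finset (Node f Z)) {z : Fin Z}
    (hz : (zpart f Z D z).card ≤ f) : f + 1 ≤ (zpart f Z Dᶜ z).card := by
  calc f + 1 ≤ 2 * f + 1 - (zpart f Z D z).card := by omega
    _ = (zpart f Z Dᶜ z).card := by
      rw [zpart, zpart, card_filter_fst_compl, Fintype.card_fin]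

theorem biUnion_mem_Q1 {S : Finset (Fin Z)} (hS : S.card = Z - F) {U : Fin Z → Finset (Node f Z)}
    (hU : ∀ z ∈ S, ∀ x ∈ U z, x.1 = z) (hcard : ∀ z ∈ S, (U z).card = f + 1) :
    S.biUnion U ∈ Q1 f F Z := by
  have hne : ∀ z ∈ S, (U z).Nonempty := fun z hz => card_pos.mp (by rw [hcard z hz]; omega)
  refine ⟨by rw [image_fst_biUnion hU hne, hS], fun z hz => ?_⟩
  rw [zpart, filter_fst_biUnion hU] at hz ⊢
  split_ifs at hz ⊢ with hzS
  · exact hcard z hzS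
  · exact absurd hz not_nonempty_empty

end Zones

theorem wpaxos_q1_fault_tolerance_general (f F Z : ℕ)
    (D : Finset (Node f Z))
    (hD : (Finset.univ.filter
        (fun z : Fin Z => f + 1 ≤ (zpart f Z D z).card)).card ≤ F) :
    ∃ q1 ∈ Q1 f F Z, q1 ∩ D = ∅ := by
  have hlight := card_sub_le_card_filter_le _ hD
  rw [Fintype.card_fin] at hlight
  obtain ⟨S, hSlight, hS⟩ := exists_subset_card_eq hlight
  have hzone : ∀ z ∈ S, ∃ U ⊆ zpart f Z Dᶜ z, U.card = f + 1 := fun z hz =>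
    exists_subset_card_eq (add_one_le_card_zpart_compl D (mem_filter.mp (hSlight hz)).2)
  choose! U hUD hUcard using hzone
  have hfibred : ∀ z ∈ S, ∀ x ∈ U z, x.1 = z := fun z hz x hx =>
    (mem_filter.mp (hUD z hz hx)).2
  refine ⟨S.biUnion U, biUnion_mem_Q1 hS hfibred hUcard, ?_⟩
  rw [← disjoint_iff_inter_eq_empty, disjoint_biUnion_left]
  exact fun z hz => disjoint_left.mpr fun x hx => mem_compl.mp (mem_filter.mp (hUD z hz hx)).1

/-- If at most `F` zones contain `f+1` or more failed nodes, then some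
phase-1 quorum avoids all failed nodes. -/
theorem wpaxos_q1_fault_tolerance (f F Z : ℕ) (hFZ : F < Z)
    (D : Finset (Node f Z))
    (hD : (Finset.univ.filter
        (fun z : Fin Z => f + 1 ≤ (zpart f Z D z).card)).card ≤ F) :
    ∃ q1 ∈ Q1 f F Z, q1 ∩ D = ∅ :=
  wpaxos_q1_fault_tolerance_general f F Z D hD
end

section
/- For any q1 ∈ Q1, q2 ∈ Q2 of the WPaxos quorum system, and any zone z that is touched by both quorums (i.e., both (q1)_z and (q2)_z are nonempty), the intersection q1 ∩ q2 contains at least one node whose zone is z; moreover at least one such common zone z exists. -/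
/-- For every zone touched by both a phase-1 quorum and a phase-2 quorum, the
two quorums share a node in that zone; moreover some such common zone exists. -/
theorem wpaxos_quorums_intersect_in_common_zone (f F Z : ℕ) (hFZ : F < Z)
    (q1 : Finset (Node f Z)) (hq1 : q1 ∈ Q1 f F Z)
    (q2 : Finset (Node f Z)) (hq2 : q2 ∈ Q2 f F Z) :
    (∀ z : Fin Z, (zpart f Z q1 z).Nonempty → (zpart f Z q2 z).Nonempty →
      ∃ x ∈ q1 ∩ q2, x.1 = z) ∧
    (∃ z : Fin Z, (zpart f Z q1 z).Nonempty ∧ (zpart f Z q2 z).Nonempty) := by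
  obtain ⟨hc1, hz1⟩ := hq1
  obtain ⟨hc2, hz2⟩ := hq2
  constructor
  · intro z h1 h2
    -- both zone parts live in the filter of univ over zone z, which has 2f+1 elements
    have hsub : zpart f Z q1 z ∪ zpart f Z q2 z ⊆
        Finset.univ.filter (fun x : Node f Z => x.1 = z) := by
      intro x hx
      simp only [Finset.mem_union, zpart, Finset.mem_filter] at hx ⊢
      rcases hx with ⟨_, h⟩ | ⟨_, h⟩ <;> exact ⟨Finset.mem_univ x, h⟩
    have hcardu : (Finset.univ.filter (fun x : Node f Z => x.1 = z)).card = 2 * f + 1 := by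
      have : Finset.univ.filter (fun x : Node f Z => x.1 = z)
          = {z} ×ˢ (Finset.univ : Finset (Fin (2 * f + 1))) := by
        ext x
        simp only [Finset.mem_filter, Finset.mem_univ, true_and, Finset.mem_product,
          Finset.mem_singleton]
        exact ⟨fun h => ⟨h, trivial⟩, fun h => h.1⟩
      rw [this, Finset.card_product]
      simp
    by_contra hcon
    push_neg at hcon
    have hdisj : Disjoint (zpart f Z q1 z) (zpart f Z q2 z) := by
      rw [Finset.disjoint_left]
      intro x hx1 hx2
      simp only [zpart, Finset.mem_filter] at hx1 hx2
      exact hcon x (Finset.mem_inter.mpr ⟨hx1.1, hx2.1⟩) hx1.2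
    have := Finset.card_le_card hsub
    rw [Finset.card_union_of_disjoint hdisj, hz1 z h1, hz2 z h2, hcardu] at this
    omega
  · -- the zone images intersect since (Z-F) + (F+1) > Z
    have h := Finset.card_union_le (q1.image Prod.fst) (q2.image Prod.fst)
    have hle : ((q1.image Prod.fst) ∪ (q2.image Prod.fst)).card ≤ Z := by
      calc _ ≤ (Finset.univ : Finset (Fin Z)).card := Finset.card_le_card (Finset.subset_univ _)
      _ = Z := Finset.card_univ.trans (Fintype.card_fin Z)
    rw [hc1, hc2] at h
    have : ((q1.image Prod.fst) ∩ (q2.image Prod.fst)).Nonempty := by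
      rw [← Finset.card_pos]
      have h2 := Finset.card_inter_add_card_union (q1.image Prod.fst) (q2.image Prod.fst)
      rw [hc1, hc2] at h2
      omega
    obtain ⟨z, hz⟩ := this
    rw [Finset.mem_inter] at hz
    obtain ⟨x1, hx1, hx1z⟩ := Finset.mem_image.mp hz.1
    obtain ⟨x2, hx2, hx2z⟩ := Finset.mem_image.mp hz.2
    exact ⟨z, ⟨x1, Finset.mem_filter.mpr ⟨hx1, hx1z⟩⟩, ⟨x2, Finset.mem_filter.mpr ⟨hx2, hx2z⟩⟩⟩
end
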